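/- arXiv:2602.20032 — 2 statements merged into one kernel-verified Lean document; each statement's English description precedes it below -/
import Mathlib

section
/- Let B be a Bratteli diagram with finitely many sources and let ℓ be the associated length function. For every real M ≥ 0 there exists N ∈ ℕ such that every pair (x,y) of tail-equivalent infinite paths with ℓ(x,y) ≤ M satisfies x_n = y_n for all n > N. -/
/-!
Above the last source level `N₀` every vertex is the target of an edge, so the excess
`c_k - |V_k|` of paths over vertices never decreases, and it grows by at least one at every
level `j` where two edges have a common target. If `x ≠ y` are tail-equivalent with
`k(x,y) = j + 1 > N₀`, then `x_j ≠ y_j` are such edges, so `c_{j+1}` exceeds the number of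
such merge levels in `[N₀, j]`. Hence only finitely many merge levels `j` have
`c_{j+1} ≤ M`, and any `N` beyond all of them works.
-/

/-- A Bratteli diagram: nonempty finite vertex levels `V n` (`n ≥ 0`), finite edge
sets `E n` consisting of the edges from level `n` to level `n + 1`, with source and
target maps, such that every vertex emits at least one edge. -/
structure BratteliDiagram where
  V : ℕ → Type
  E : ℕ → Type
  vFinite : ∀ n, Finite (V n)
  vNonempty : ∀ n, Nonempty (V n)
  eFinite : ∀ n, Finite (E n)
  src : ∀ n, E n → V n
  tgt : ∀ n, E n → V (n + 1)
  src_surjective : ∀ n, Function.Surjective (src n)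

namespace BratteliDiagram

variable (B : BratteliDiagram)

/-- A vertex is a source if no edge has it as its target (in particular, every
level-0 vertex is a source). -/
def IsSource : (n : ℕ) → B.V n → Prop
  | 0, _ => True
  | n + 1, v => ¬ ∃ e : B.E n, B.tgt n e = v

/-- `B` has finitely many sources: beyond some level there are no sources. -/
def FinSources : Prop :=
  ∃ N : ℕ, ∀ n : ℕ, N < n → ∀ v : B.V n, ¬ B.IsSource n v

/-- The type of finite paths in `B` starting at some source and ending at the
vertex `w` of level `k` (including the empty path when `w` itself is a source). -/
def PathEnd : (k : ℕ) → B.V k → Type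
  | 0, w => PLift (B.IsSource 0 w)
  | k + 1, w =>
      PLift (B.IsSource (k + 1) w) ⊕
        Σ e : B.E k, PLift (B.tgt k e = w) × PathEnd k (B.src k e)

/-- `c_k = Σ_{v ∈ S(B)} |P(v, V_k)|`: the total number of finite paths from the
sources of `B` to level `k`. -/
noncomputable def pathCount (k : ℕ) : ℕ :=
  Nat.card (Σ w : B.V k, B.PathEnd k w)

/-- An infinite path of `B` starting at a source: `edge n _` is the edge from
level `n` to level `n + 1` followed by the path (defined for `n ≥ start`). -/
structure InfPath where
  start : ℕ
  edge : ∀ n, start ≤ n → B.E n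
  start_isSource : B.IsSource start (B.src start (edge start le_rfl))
  compat : ∀ n (h : start ≤ n),
    B.src (n + 1) (edge (n + 1) (h.trans (Nat.le_succ n))) = B.tgt n (edge n h)

variable {B}

/-- `x` and `y` both start at level at most `m` and their edges agree from
level `m` on (i.e. `x_n = y_n` for all paper-levels `n > m`). -/
def AgreesFrom (x y : B.InfPath) (m : ℕ) : Prop :=
  ∃ (hx : x.start ≤ m) (hy : y.start ≤ m),
    ∀ n (h : m ≤ n), x.edge n (hx.trans h) = y.edge n (hy.trans h)

/-- Tail equivalence of infinite paths. -/
def TailEquiv (x y : B.InfPath) : Prop :=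
  ∃ m : ℕ, AgreesFrom x y m

/-- `k(x,y)`: the least level from which the infinite paths `x` and `y` agree. -/
noncomputable def kIdx (x y : B.InfPath) : ℕ :=
  sInf {m : ℕ | AgreesFrom x y m}

/-- The length function associated with the Bratteli diagram `B`:
`ℓ(x,y) = c_{k(x,y)}` for `x ≠ y` and `ℓ(x,x) = 0`. -/
noncomputable def len (x y : B.InfPath) : ℕ :=
  letI := Classical.dec (x = y)
  if x = y then 0 else B.pathCount (kIdx x y)

end BratteliDiagram

namespace BratteliDiagram

open Finset

variable {B : BratteliDiagram} {N k : ℕ}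

instance (n : ℕ) : Finite (B.V n) := B.vFinite n

instance (n : ℕ) : Finite (B.E n) := B.eFinite n

instance finite_pathEnd : ∀ (k : ℕ) (w : B.V k), Finite (B.PathEnd k w)
  | 0, _ => inferInstanceAs (Finite (PLift _))
  | k + 1, _ =>
    have : ∀ e : B.E k, Finite (B.PathEnd k (B.src k e)) := fun _ => finite_pathEnd k _
    inferInstanceAs (Finite (_ ⊕ Σ _ : B.E k, _))

theorem nonempty_pathEnd : ∀ (k : ℕ) (w : B.V k), Nonempty (B.PathEnd k w)
  | 0, _ => ⟨PLift.up trivial⟩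
  | k + 1, w => by
    by_cases hw : B.IsSource (k + 1) w
    · exact ⟨Sum.inl (PLift.up hw)⟩
    · obtain ⟨e, he⟩ := not_not.mp hw
      obtain ⟨p⟩ := nonempty_pathEnd k (B.src k e)
      exact ⟨Sum.inr ⟨e, PLift.up he, p⟩⟩

theorem one_le_card_pathEnd (k : ℕ) (w : B.V k) : 1 ≤ Nat.card (B.PathEnd k w) :=
  have := nonempty_pathEnd k w
  Nat.card_pos

theorem card_vert_le_pathCount (k : ℕ) : Nat.card (B.V k) ≤ B.pathCount k :=
  have := nonempty_pathEnd (B := B) k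
  Nat.card_le_card_of_surjective Sigma.fst fun w => ⟨⟨w, Classical.ofNonempty⟩, rfl⟩

theorem pathCount_eq_sum [Fintype (B.V k)] :
    B.pathCount k = ∑ w, Nat.card (B.PathEnd k w) :=
  Nat.card_sigma

def pathSuccEquiv (k : ℕ) :
    (Σ w : B.V (k + 1), B.PathEnd (k + 1) w) ≃
      (Σ w : B.V (k + 1), PLift (B.IsSource (k + 1) w)) ⊕
        (Σ e : B.E k, B.PathEnd k (B.src k e)) where
  toFun
    | ⟨w, Sum.inl s⟩ => Sum.inl ⟨w, s⟩
    | ⟨_, Sum.inr ⟨e, _, p⟩⟩ => Sum.inr ⟨e, p⟩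
  invFun
    | Sum.inl ⟨w, s⟩ => ⟨w, Sum.inl s⟩
    | Sum.inr ⟨e, p⟩ => ⟨B.tgt k e, Sum.inr ⟨e, PLift.up rfl, p⟩⟩
  left_inv := by
    rintro ⟨w, s | ⟨e, ⟨rfl⟩, p⟩⟩ <;> rfl
  right_inv := by
    rintro (⟨w, s⟩ | ⟨e, p⟩) <;> rfl

theorem pathCount_succ_eq_sum_edge (k : ℕ) (hk : ∀ w : B.V (k + 1), ¬ B.IsSource (k + 1) w)
    [Fintype (B.E k)] :
    B.pathCount (k + 1) = ∑ e, Nat.card (B.PathEnd k (B.src k e)) := by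
  have : IsEmpty (Σ w : B.V (k + 1), PLift (B.IsSource (k + 1) w)) :=
    ⟨fun p => hk p.1 p.2.down⟩
  rw [pathCount, Nat.card_congr ((pathSuccEquiv k).trans (Equiv.emptySum _ _)), Nat.card_sigma]

/-- Each vertex `w` of level `k` contributes `outdeg w * |P(w)| ≥ |P(w)| + outdeg w - 1`
paths to level `k + 1`. -/
theorem pathCount_add_card_edge_le (k : ℕ) (hk : ∀ w : B.V (k + 1), ¬ B.IsSource (k + 1) w) :
    B.pathCount k + Nat.card (B.E k) ≤ B.pathCount (k + 1) + Nat.card (B.V k) := by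
  classical
  have := Fintype.ofFinite (B.V k)
  have := Fintype.ofFinite (B.E k)
  set outdeg : B.V k → ℕ := fun w => #{e | B.src k e = w}
  have one_le_outdeg (w : B.V k) : 1 ≤ outdeg w := by
    obtain ⟨e, rfl⟩ := B.src_surjective k w
    exact card_pos.mpr ⟨e, by simp⟩
  have sum_outdeg : ∑ w, outdeg w = Nat.card (B.E k) := by
    rw [Nat.card_eq_fintype_card, ← card_univ,
      card_eq_sum_card_fiberwise fun e _ => mem_univ (B.src k e)]
  have sum_edge : ∑ e, Nat.card (B.PathEnd k (B.src k e)) =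
      ∑ w, outdeg w * Nat.card (B.PathEnd k w) := by
    rw [← sum_fiberwise Finset.univ (B.src k)]
    refine sum_congr rfl fun w _ => ?_
    rw [sum_congr rfl fun e he => by rw [(mem_filter.mp he).2],
      sum_const, smul_eq_mul]
  rw [pathCount_eq_sum, pathCount_succ_eq_sum_edge k hk, sum_edge, ← sum_outdeg,
    Nat.card_eq_fintype_card, Fintype.card_eq_sum_ones, ← sum_add_distrib,
    ← sum_add_distrib]
  refine sum_le_sum fun w _ => ?_
  have := one_le_outdeg w
  have := one_le_card_pathEnd k w
  nlinarith

def MergeAt (B : BratteliDiagram) (j : ℕ) : Prop :=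
  ¬ Function.Injective (B.tgt j)

theorem card_vert_succ_le_card_edge (hsurj : Function.Surjective (B.tgt k)) :
    Nat.card (B.V (k + 1)) ≤ Nat.card (B.E k) :=
  Nat.card_le_card_of_surjective _ hsurj

theorem card_vert_succ_lt_card_edge (hsurj : Function.Surjective (B.tgt k))
    (hk : B.MergeAt k) : Nat.card (B.V (k + 1)) < Nat.card (B.E k) := by
  have := Fintype.ofFinite (B.V (k + 1))
  have := Fintype.ofFinite (B.E k)
  simpa only [Nat.card_eq_fintype_card] using
    Fintype.card_lt_of_surjective_not_injective _ hsurj hk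

def NoSourceAbove (B : BratteliDiagram) (N : ℕ) : Prop :=
  ∀ n : ℕ, N < n → ∀ v : B.V n, ¬ B.IsSource n v

theorem NoSourceAbove.tgt_surjective (hN : B.NoSourceAbove N) (hk : N ≤ k) :
    Function.Surjective (B.tgt k) :=
  fun w => not_not.mp (hN (k + 1) (by omega) w)

open Classical in
theorem NoSourceAbove.card_mergeAt_add_card_vert_le (hN : B.NoSourceAbove N) :
    ∀ k, N ≤ k → #{j ∈ Ico N k | B.MergeAt j} + Nat.card (B.V k) ≤ B.pathCount k := by
  refine Nat.le_induction ?_ fun k hk ih => ?_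
  · simpa using card_vert_le_pathCount N
  · have hpath := pathCount_add_card_edge_le k (hN (k + 1) (by omega))
    have hsurj := hN.tgt_surjective hk
    rw [Nat.Ico_succ_right_eq_insert_Ico hk, filter_insert]
    split_ifs with hmerge
    · have := card_vert_succ_lt_card_edge hsurj hmerge
      have := card_insert_le k {j ∈ Ico N k | B.MergeAt j}
      omega
    · have := card_vert_succ_le_card_edge hsurj
      omega

theorem NoSourceAbove.finite_mergeAt_pathCount_le (hN : B.NoSourceAbove N) (M : ℕ) :
    {j | N ≤ j ∧ B.MergeAt j ∧ B.pathCount (j + 1) ≤ M}.Finite := by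
  classical
  by_contra hinf
  obtain ⟨F, hFS, hFcard⟩ := Set.Infinite.exists_subset_card_eq hinf (M + 1)
  have hF : F.Nonempty := card_pos.mp (by omega)
  obtain ⟨hkN, -, hkM⟩ := hFS (F.max'_mem hF)
  have hsub : F ⊆ {j ∈ Ico N (F.max' hF + 1) | B.MergeAt j} := fun j hj => by
    obtain ⟨hjN, hj_merge, -⟩ := hFS hj
    simpa [hjN, hj_merge, Nat.lt_succ_iff] using F.le_max' j hj
  have := card_le_card hsub
  have := hN.card_mergeAt_add_card_vert_le _ (by omega : N ≤ F.max' hF + 1)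
  have := B.vNonempty (F.max' hF + 1)
  have := Nat.card_pos (α := B.V (F.max' hF + 1))
  omega

theorem NoSourceAbove.start_le (hN : B.NoSourceAbove N) (x : B.InfPath) : x.start ≤ N :=
  not_lt.mp fun h => hN x.start h _ x.start_isSource

theorem agreesFrom_self {m : ℕ} (x : B.InfPath) (hm : x.start ≤ m) : AgreesFrom x x m :=
  ⟨hm, hm, fun _ _ => rfl⟩

theorem AgreesFrom.mono {x y : B.InfPath} {m m' : ℕ} (h : AgreesFrom x y m) (hm : m ≤ m') :
    AgreesFrom x y m' :=
  let ⟨hx, hy, hag⟩ := h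
  ⟨hx.trans hm, hy.trans hm, fun n hn => hag n (hm.trans hn)⟩

theorem TailEquiv.agreesFrom_kIdx {x y : B.InfPath} (h : TailEquiv x y) :
    AgreesFrom x y (kIdx x y) :=
  Nat.sInf_mem h

theorem len_of_ne {x y : B.InfPath} (h : x ≠ y) : len x y = B.pathCount (kIdx x y) :=
  if_neg h

theorem TailEquiv.mergeAt (hN : B.NoSourceAbove N) {x y : B.InfPath} {j : ℕ}
    (hxy : TailEquiv x y) (hj : N ≤ j) (hk : kIdx x y = j + 1) : B.MergeAt j := by
  obtain ⟨hx, hy, hag⟩ := hk ▸ hxy.agreesFrom_kIdx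
  have hxj := (hN.start_le x).trans hj
  have hyj := (hN.start_le y).trans hj
  intro hinj
  have hedge : x.edge j hxj = y.edge j hyj := hinj <| by
    rw [← x.compat j hxj, ← y.compat j hyj]
    exact congrArg _ (hag (j + 1) le_rfl)
  have : kIdx x y ≤ j := Nat.sInf_le ⟨hxj, hyj, fun n hn => by
    rcases hn.eq_or_lt with rfl | hlt
    · exact hedge
    · exact hag n hlt⟩
  omega

end BratteliDiagram

open BratteliDiagram in
theorem bratteliLen_proper_general (B : BratteliDiagram) (hB : B.FinSources)
    (M : ℝ) :
    ∃ N : ℕ, ∀ x y : B.InfPath, TailEquiv x y → (len x y : ℝ) ≤ M →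
      AgreesFrom x y N := by
  obtain ⟨N₀, hN⟩ : ∃ N₀, B.NoSourceAbove N₀ := hB
  obtain ⟨b, hb⟩ := (hN.finite_mergeAt_pathCount_le ⌊M⌋₊).bddAbove
  refine ⟨max N₀ b + 1, fun x y hxy hlen => ?_⟩
  by_cases hxy_eq : x = y
  · subst hxy_eq
    exact agreesFrom_self x ((hN.start_le x).trans (by omega))
  refine hxy.agreesFrom_kIdx.mono (not_lt.mp fun hlt => ?_)
  obtain ⟨j, hj⟩ : ∃ j, kIdx x y = j + 1 := ⟨kIdx x y - 1, by omega⟩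
  have hmerge := hxy.mergeAt hN (by omega) hj
  rw [len_of_ne hxy_eq, hj] at hlen
  have := hb ⟨by omega, hmerge, Nat.le_floor hlen⟩
  omega

open BratteliDiagram in
/-- Proposition 4.5 (combinatorial content): for every `M ≥ 0` there is a level `N`
such that every pair of tail-equivalent infinite paths with `ℓ(x,y) ≤ M` agrees from
level `N` on (in particular both start at level at most `N`); that is, the ball
`B_ℓ(M)` is contained in the compact subgroupoid `G_N`, so `ℓ` is proper. -/
theorem bratteliLen_proper (B : BratteliDiagram) (hB : B.FinSources)
    (M : ℝ) (hM : 0 ≤ M) :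
    ∃ N : ℕ, ∀ x y : B.InfPath, TailEquiv x y → (len x y : ℝ) ≤ M →
      AgreesFrom x y N :=
  bratteliLen_proper_general B hB M
end

section
/- Let B be a Bratteli diagram with finitely many sources. If sup_k c_k < ∞, where c_k is the total number of finite paths from the sources to level k, then the infinite path space X_B is finite; consequently the set of pairs (x,y) ∈ X_B × X_B of tail-equivalent infinite paths is finite. -/
/-! Distinct infinite paths have distinct truncations at every sufficiently deep level `k`, and
the truncation at level `k` of an infinite path starting at a level `≤ k` is one of the `c_k`
finite paths counted by `pathCount k`. So `n` distinct infinite paths force `n ≤ c_k` for some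
`k`, and a uniform bound on the `c_k` bounds the number of infinite paths. -/

namespace BratteliDiagram

variable {B : BratteliDiagram}

instance instFinitePathEnd : ∀ (k : ℕ) (w : B.V k), Finite (B.PathEnd k w)
  | 0, _ => inferInstanceAs (Finite (PLift _))
  | k + 1, w =>
    have := B.eFinite k
    have := fun e : B.E k => instFinitePathEnd k (B.src k e)
    inferInstanceAs (Finite (PLift _ ⊕ Σ e : B.E k, PLift (B.tgt k e = w) × _))

instance instFiniteSigmaPathEnd (k : ℕ) : Finite (Σ w : B.V k, B.PathEnd k w) :=
  have := B.vFinite k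
  inferInstance

namespace PathEnd

def startLevel : (k : ℕ) → (w : B.V k) → B.PathEnd k w → ℕ
  | 0, _, _ => 0
  | k + 1, _, Sum.inl _ => k + 1
  | k + 1, _, Sum.inr ⟨e, _, q⟩ => startLevel k (B.src k e) q

def edgeAt : (k : ℕ) → (w : B.V k) → B.PathEnd k w → (m : ℕ) → Option (B.E m)
  | 0, _, _, _ => none
  | _ + 1, _, Sum.inl _, _ => none
  | k + 1, _, Sum.inr ⟨e, _, q⟩, m =>
    if h : k = m then some (h ▸ e) else edgeAt k (B.src k e) q m

end PathEnd

namespace InfPath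

lemma isSource_src_edge_of_start_eq (x : B.InfPath) {k : ℕ} (hk : x.start = k)
    (h : x.start ≤ k) : B.IsSource k (B.src k (x.edge k h)) := by
  subst hk
  exact x.start_isSource

def truncate (x : B.InfPath) : (k : ℕ) → (h : x.start ≤ k) → B.PathEnd k (B.src k (x.edge k h))
  | 0, _ => ⟨trivial⟩
  | k + 1, h =>
    if hk : x.start = k + 1 then Sum.inl ⟨x.isSource_src_edge_of_start_eq hk h⟩
    else
      have hk : x.start ≤ k := by omega
      Sum.inr ⟨x.edge k hk, ⟨(x.compat k hk).symm⟩, x.truncate k hk⟩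

lemma startLevel_truncate (x : B.InfPath) :
    ∀ (k : ℕ) (h : x.start ≤ k), PathEnd.startLevel k _ (x.truncate k h) = x.start
  | 0, h => (Nat.le_zero.mp h).symm
  | k + 1, h => by
    by_cases hk : x.start = k + 1
    · simp only [truncate, hk, ↓reduceDIte, PathEnd.startLevel]
    · simp only [truncate, hk, ↓reduceDIte, PathEnd.startLevel, startLevel_truncate]

lemma edgeAt_truncate (x : B.InfPath) :
    ∀ (k : ℕ) (h : x.start ≤ k) (m : ℕ) (hm : x.start ≤ m), m < k →
      PathEnd.edgeAt k _ (x.truncate k h) m = some (x.edge m hm)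
  | 0, _, _, _, hmk => absurd hmk (Nat.not_lt_zero _)
  | k + 1, h, m, hm, hmk => by
    have hk : x.start ≠ k + 1 := by omega
    by_cases hkm : k = m
    · subst hkm
      simp only [truncate, hk, ↓reduceDIte, PathEnd.edgeAt]
    · simp only [truncate, hk, ↓reduceDIte, PathEnd.edgeAt, hkm,
        edgeAt_truncate x k _ m hm (by omega)]

lemma ext_of_edge_eq {x y : B.InfPath} (hs : x.start = y.start)
    (he : ∀ m (hx : x.start ≤ m) (hy : y.start ≤ m), x.edge m hx = y.edge m hy) : x = y := by
  obtain ⟨s, e, _, _⟩ := x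
  obtain ⟨_, e', _, _⟩ := y
  subst hs
  obtain rfl : e = e' := funext fun n => funext fun h => he n h h
  rfl

lemma start_eq_of_truncate_eq {x y : B.InfPath} {k : ℕ} {hx : x.start ≤ k} {hy : y.start ≤ k}
    (H : (⟨_, x.truncate k hx⟩ : Σ w, B.PathEnd k w) = ⟨_, y.truncate k hy⟩) :
    x.start = y.start := by
  simpa only [startLevel_truncate] using congrArg (fun p => PathEnd.startLevel k p.1 p.2) H

lemma edge_eq_of_truncate_eq {x y : B.InfPath} {k : ℕ} {hx : x.start ≤ k} {hy : y.start ≤ k}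
    (H : (⟨_, x.truncate k hx⟩ : Σ w, B.PathEnd k w) = ⟨_, y.truncate k hy⟩)
    {m : ℕ} (hxm : x.start ≤ m) (hym : y.start ≤ m) (hmk : m < k) :
    x.edge m hxm = y.edge m hym := by
  have h := congrArg (fun p => PathEnd.edgeAt k p.1 p.2 m) H
  rw [edgeAt_truncate x k hx m hxm hmk, edgeAt_truncate y k hy m hym hmk] at h
  exact Option.some.inj h

lemma exists_forall_ge_eq_of_truncate_eq (x y : B.InfPath) : ∃ d : ℕ, ∀ k, d ≤ k →
    ∀ (hx : x.start ≤ k) (hy : y.start ≤ k),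
      (⟨_, x.truncate k hx⟩ : Σ w, B.PathEnd k w) = ⟨_, y.truncate k hy⟩ → x = y := by
  by_cases hs : x.start = y.start
  · by_cases he : ∀ m (hx : x.start ≤ m) (hy : y.start ≤ m), x.edge m hx = y.edge m hy
    · exact ⟨0, fun _ _ _ _ _ => ext_of_edge_eq hs he⟩
    push Not at he
    obtain ⟨m, hxm, hym, hne⟩ := he
    exact ⟨m + 1, fun k hk _ _ H => (hne (edge_eq_of_truncate_eq H hxm hym hk)).elim⟩
  · exact ⟨0, fun _ _ _ _ H => (hs (start_eq_of_truncate_eq H)).elim⟩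

end InfPath

lemma exists_card_le_pathCount (S : Finset B.InfPath) : ∃ k, S.card ≤ B.pathCount k := by
  choose d hd using InfPath.exists_forall_ge_eq_of_truncate_eq (B := B)
  let k := S.sup InfPath.start + (S ×ˢ S).sup fun p => d p.1 p.2
  have hstart : ∀ x ∈ S, x.start ≤ k := fun x hx =>
    (Finset.le_sup hx).trans (Nat.le_add_right _ _)
  have hdk : ∀ x ∈ S, ∀ y ∈ S, d x y ≤ k := fun x hx y hy =>
    (Finset.le_sup (f := fun p => d p.1 p.2) (Finset.mk_mem_product hx hy)).trans
      (Nat.le_add_left _ _)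
  refine ⟨k, ?_⟩
  rw [← Nat.card_eq_finsetCard, pathCount]
  exact Nat.card_le_card_of_injective (fun x : S => ⟨_, x.1.truncate k (hstart x.1 x.2)⟩)
    fun x y H => Subtype.ext (hd x y k (hdk x x.2 y y.2) _ _ H)

lemma finite_infPath_of_pathCount_le {C : ℕ} (hC : ∀ k, B.pathCount k ≤ C) :
    Finite B.InfPath := by
  by_contra hinf
  rw [not_finite_iff_infinite] at hinf
  obtain ⟨S, hS⟩ := Infinite.exists_subset_card_eq B.InfPath (C + 1)
  obtain ⟨k, hk⟩ := exists_card_le_pathCount S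
  have := hC k
  omega

end BratteliDiagram

open BratteliDiagram in
theorem finite_of_pathCount_bounded_general (B : BratteliDiagram)
    (hbd : ∃ C : ℕ, ∀ k : ℕ, B.pathCount k ≤ C) :
    Finite B.InfPath ∧
      {p : B.InfPath × B.InfPath | TailEquiv p.1 p.2}.Finite := by
  obtain ⟨C, hC⟩ := hbd
  have := finite_infPath_of_pathCount_le hC
  exact ⟨this, Set.toFinite _⟩

open BratteliDiagram in
/-- Bounded case of Proposition 4.5: if the path counts `c_k` of a Bratteli diagram
with finitely many sources are uniformly bounded, then the infinite path space is
finite, and consequently the set of tail-equivalent pairs is finite. -/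
theorem finite_of_pathCount_bounded (B : BratteliDiagram) (hB : B.FinSources)
    (hbd : ∃ C : ℕ, ∀ k : ℕ, B.pathCount k ≤ C) :
    Finite B.InfPath ∧
      {p : B.InfPath × B.InfPath | TailEquiv p.1 p.2}.Finite :=
  finite_of_pathCount_bounded_general B hbd
end
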